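/- Let k be a positive integer and let G be a finite simple graph in which every cycle has length at least 2k+3. Then every subgraph of G that is a k-evine is contained in a unique maximal k-evine of G, namely the k-eball at its central edge e: the k-eball at e contains the given k-evine and every k-evine of G containing the given k-evine is a subgraph of the k-eball at e. -/

import Mathlib

open SimpleGraph

/-- The eccentricity (`ℕ∞`-valued) of a vertex: supremum of extended distances to
all vertices.  It is infinite if the graph is disconnected. -/
noncomputable def eccent {V : Type*} (G : SimpleGraph V) (v : V) : ℕ∞ :=
  ⨆ w, G.edist v w

/-- The radius (`ℕ∞`-valued) of a graph: minimum eccentricity. -/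
noncomputable def gradius {V : Type*} (G : SimpleGraph V) : ℕ∞ :=
  ⨅ v, _root_.eccent G v

/-- The diameter (`ℕ∞`-valued) of a graph: maximum distance between two vertices. -/
noncomputable def gdiam {V : Type*} (G : SimpleGraph V) : ℕ∞ :=
  ⨆ v, ⨆ w, G.edist v w

/-- Two graphs on `Fin n` have the same `k`-deck: there is a bijection `φ` between the
`k`-element vertex subsets such that for each subset `s` the subgraph induced by `s` in the
first graph is isomorphic to the subgraph induced by `φ s` in the second. -/
def SameDeck {n : ℕ} (G H : SimpleGraph (Fin n)) (k : ℕ) : Prop :=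
  ∃ φ : {s : Finset (Fin n) // s.card = k} ≃ {s : Finset (Fin n) // s.card = k},
    ∀ s : {s : Finset (Fin n) // s.card = k},
      Nonempty ((SimpleGraph.induce (↑s.1 : Set (Fin n)) G) ≃g
                (SimpleGraph.induce (↑(φ s).1 : Set (Fin n)) H))

/-- A `k`-evine: a tree with diameter exactly `2k+1`. -/
def IsEvine {V : Type*} (k : ℕ) (A : SimpleGraph V) : Prop :=
  A.IsTree ∧ gdiam A = ((2 * k + 1 : ℕ) : ℕ∞)

/-- The `k`-eball at an edge `uv` of `G`: the subgraph induced by all vertices at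
distance at most `k` from `u` or from `v`. -/
def kEball {V : Type*} (G : SimpleGraph V) (u v : V) (k : ℕ) : G.Subgraph :=
  (⊤ : G.Subgraph).induce {w | G.edist u w ≤ (k : ℕ∞) ∨ G.edist v w ≤ (k : ℕ∞)}

/-- A `k`-central edge of `G`: an edge `uv` whose `k`-eball contains a `k`-evine
whose central edge is `uv` (its two endpoints having eccentricity `k+1` in the evine). -/
def IsKCentralEdge {V : Type*} (k : ℕ) (G : SimpleGraph V) (u v : V) : Prop :=
  G.Adj u v ∧ ∃ (B : G.Subgraph) (hu : u ∈ B.verts) (hv : v ∈ B.verts),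
    B ≤ kEball G u v k ∧ IsEvine k B.coe ∧ B.Adj u v ∧
    _root_.eccent B.coe ⟨u, hu⟩ = ((k + 1 : ℕ) : ℕ∞) ∧
    _root_.eccent B.coe ⟨v, hv⟩ = ((k + 1 : ℕ) : ℕ∞)

/-!
Let `uv` be the central edge of the `k`-evine `B`, and cut the tree `B' ⊇ B` at its bridge `uv`.
Some `x ∈ B` has `d(u, x) = k + 1 ≥ d(v, x)`, so `x` lies on the `v`-side, at distance `k + 1`
from `u`; since tree distances between vertices of `B` do not change in `B'`, this holds in `B'`
as well. A vertex `w` of `B'` on the `u`-side then satisfies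
`k + 1 + d(u, w) = d(x, w) ≤ 2k + 1`, i.e. `d(u, w) ≤ k`; symmetrically on the `v`-side. So `B'`
lies in the `k`-eball at `uv` (and `B' = B` gives `B` itself).

Every vertex of the `k`-eball is joined to `u` or `v` by a geodesic of length at most `k` lying
inside it, which bounds its diameter by `2k + 1`.
It is acyclic because on a cycle inside it, a vertex farthest from `u` would have two cycle
neighbours one step closer to `u`, and geodesics to `u` close them into a cycle of length at most
`2k + 2`. Containing `B`, it is a tree of diameter exactly `2k + 1`.
-/

namespace SimpleGraph

variable {V W : Type*} {G : SimpleGraph V} {a b c u v w x y z : V}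

lemma Walk.notMem_support_of_length_le_edist (p : G.Walk a b) (hxb : x ≠ b)
    (h : (p.length : ℕ∞) ≤ G.edist a x) : x ∉ p.support := fun hx ↦ by
  classical
  have := (edist_le (p.takeUntil x hx)).trans_lt
    (Nat.cast_lt.mpr (p.length_takeUntil_lt_length hx hxb))
  exact lt_irrefl _ (this.trans_le h)

lemma edist_add_edist_le_of_forall_mem_support (h : ∀ p : G.Walk a b, x ∈ p.support) :
    G.edist a x + G.edist x b ≤ G.edist a b := by
  classical
  rcases eq_or_ne (G.edist a b) ⊤ with hab | hab
  · simp [hab]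
  obtain ⟨p, hp⟩ := exists_walk_of_edist_ne_top hab
  calc G.edist a x + G.edist x b
      ≤ (p.takeUntil x (h p)).length + (p.dropUntil x (h p)).length :=
        add_le_add (edist_le _) (edist_le _)
    _ = G.edist a b := by rw [← hp, ← Nat.cast_add, ← Walk.length_append, p.take_spec]

lemma edist_map_le {H : SimpleGraph W} (f : G →g H) : H.edist (f a) (f b) ≤ G.edist a b := by
  rcases eq_or_ne (G.edist a b) ⊤ with hab | hab
  · simp [hab]
  obtain ⟨p, hp⟩ := exists_walk_of_edist_ne_top hab
  exact hp ▸ (p.length_map f) ▸ edist_le (p.map f)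

lemma edist_induce_le {s : Set V} (hs : ∀ z, G.edist c z ≤ G.edist c w → z ∈ s) (hc : c ∈ s)
    (hw : w ∈ s) : (G.induce s).edist ⟨c, hc⟩ ⟨w, hw⟩ ≤ G.edist c w := by
  classical
  rcases eq_or_ne (G.edist c w) ⊤ with h | h
  · simp [h]
  obtain ⟨p, hp⟩ := exists_walk_of_edist_ne_top h
  have hsupp (z : V) (hz : z ∈ p.support) : z ∈ s := hs z <|
    (edist_le (p.takeUntil z hz)).trans (hp ▸ Nat.cast_le.mpr (p.length_takeUntil_le_length hz))
  calc (G.induce s).edist ⟨c, hc⟩ ⟨w, hw⟩ ≤ (p.induce s hsupp).length := edist_le _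
    _ = G.edist c w := by
      rw [← hp, ← Walk.length_map (Embedding.induce s).toHom, Walk.map_induce]; rfl

lemma exists_edist_eq_eccent_of_ne_top [Nonempty V] (h : G.eccent u ≠ ⊤) :
    ∃ v, G.edist u v = G.eccent u :=
  ENat.exists_eq_iSup_of_lt_top h.lt_top

lemma IsAcyclic.edist_eq_length (hG : G.IsAcyclic) {p : G.Walk a b} (hp : p.IsPath) :
    G.edist a b = p.length := by
  classical
  refine le_antisymm (edist_le p) ?_
  obtain ⟨q, hq⟩ := Reachable.exists_walk_length_eq_edist ⟨p⟩
  have : p = q.bypass :=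
    congrArg Subtype.val ((hG.subsingleton_path a b).elim ⟨p, hp⟩ ⟨_, q.bypass_isPath⟩)
  rw [this, ← hq]
  exact Nat.cast_le.mpr q.length_bypass_le_length

lemma IsAcyclic.edist_map_eq {H : SimpleGraph W} (hH : H.IsAcyclic) (f : G →g H)
    (hf : Function.Injective f) (hab : G.Reachable a b) :
    H.edist (f a) (f b) = G.edist a b := by
  obtain ⟨p, hp, hpl⟩ := hab.exists_path_of_dist
  rw [hH.edist_eq_length (hp.map hf), Walk.length_map, hpl, hab.coe_dist_eq_edist]

lemma IsAcyclic.ediam_le_of_hom {H : SimpleGraph W} (hH : H.IsAcyclic) (f : G →g H)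
    (hf : Function.Injective f) (hG : G.Preconnected) : G.ediam ≤ H.ediam :=
  ediam_le_of_edist_le fun a b ↦ hH.edist_map_eq f hf (hG a b) ▸ edist_le_ediam

lemma reachable_deleteEdges_of_edist_le (huv : u ≠ v) (hr : G.Reachable x v)
    (hx : G.edist x v ≤ G.edist x u) : (G.deleteEdges {s(u, v)}).Reachable x v := by
  obtain ⟨p, hp⟩ := hr.exists_walk_length_eq_edist
  have hu : u ∉ p.support := p.notMem_support_of_length_le_edist huv (hp ▸ hx)
  exact reachable_deleteEdges_iff_exists_walk.mpr
    ⟨p, fun he ↦ hu (p.fst_mem_support_of_mem_edges he)⟩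

/-- `x` and `w` lie on different sides of the bridge `uv`, so every walk between them passes
through `u`. -/
lemma IsTree.edist_add_edist_le (hG : G.IsTree) (huv : G.Adj u v)
    (hx : G.edist x v ≤ G.edist x u) (hw : G.edist w u ≤ G.edist w v) :
    G.edist x u + G.edist u w ≤ G.edist x w := by
  refine edist_add_edist_le_of_forall_mem_support fun p ↦ by_contra fun hu ↦ ?_
  have hxw : (G.deleteEdges {s(u, v)}).Reachable x w := reachable_deleteEdges_iff_exists_walk.mpr
    ⟨p, fun he ↦ hu (p.fst_mem_support_of_mem_edges he)⟩
  have hxv := reachable_deleteEdges_of_edist_le huv.ne (hG.connected x v) hx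
  have hwu := reachable_deleteEdges_of_edist_le huv.ne.symm (hG.connected w u) hw
  rw [Sym2.eq_swap] at hwu
  exact isBridge_iff.mp (isAcyclic_iff_forall_adj_isBridge.mp hG.isAcyclic huv)
    ((hwu.symm.trans hxw.symm).trans hxv)

lemma IsTree.edist_le_or_edist_le {k : ℕ} (hG : G.IsTree) (hdiam : G.ediam ≤ (2 * k + 1 : ℕ))
    (huv : G.Adj u v) (hxv : G.edist x v ≤ G.edist x u) (hxu : (k + 1 : ℕ) ≤ G.edist x u)
    (hyu : G.edist y u ≤ G.edist y v) (hyv : (k + 1 : ℕ) ≤ G.edist y v) (w : V) :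
    G.edist u w ≤ k ∨ G.edist v w ≤ k := by
  have key {c x : V} (hxc : (k + 1 : ℕ) ≤ G.edist x c)
      (h : G.edist x c + G.edist c w ≤ G.edist x w) : G.edist c w ≤ k := by
    refine (ENat.add_le_add_iff_left (ENat.natCast_ne_top (k + 1))).mp ?_
    calc ((k + 1 : ℕ) : ℕ∞) + G.edist c w ≤ G.edist x w := (add_le_add_left hxc _).trans h
      _ ≤ (2 * k + 1 : ℕ) := edist_le_ediam.trans hdiam
      _ = (k + 1 : ℕ) + k := by push_cast; ring
  rcases le_total (G.edist w u) (G.edist w v) with h | h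
  · exact .inl (key hxu (hG.edist_add_edist_le huv hxv h))
  · exact .inr (key hyv (hG.edist_add_edist_le huv.symm hyu h))

lemma IsTree.edist_le_or_edist_le_of_hom {k : ℕ} {H : SimpleGraph W} (hH : H.IsTree)
    (hdiam : H.ediam ≤ (2 * k + 1 : ℕ)) (f : G →g H) (hf : Function.Injective f)
    (hG : G.Connected) (huv : G.Adj u v) (hu : G.eccent u = (k + 1 : ℕ))
    (hv : G.eccent v = (k + 1 : ℕ)) (w : W) :
    H.edist (f u) w ≤ k ∨ H.edist (f v) w ≤ k := by
  have : Nonempty V := ⟨u⟩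
  have hdist (a b : V) : H.edist (f a) (f b) = G.edist a b :=
    hH.isAcyclic.edist_map_eq f hf (hG a b)
  obtain ⟨x, hx⟩ := exists_edist_eq_eccent_of_ne_top (hu ▸ ENat.natCast_ne_top _ : G.eccent u ≠ ⊤)
  obtain ⟨y, hy⟩ := exists_edist_eq_eccent_of_ne_top (hv ▸ ENat.natCast_ne_top _ : G.eccent v ≠ ⊤)
  refine hH.edist_le_or_edist_le hdiam (f.map_adj huv) (x := f x) (y := f y) ?_ ?_ ?_ ?_ w <;>
    simp only [hdist, edist_comm (u := x), edist_comm (u := y), hx, hy, hu, hv, le_refl]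
  · exact hv ▸ edist_le_eccent
  · exact hu ▸ edist_le_eccent

lemma egirth_le_length_add_one (h : G.Adj a b) (p : G.Walk b a) (hp : s(a, b) ∉ p.edges) :
    G.egirth ≤ p.length + 1 := by
  classical
  have hc : (Walk.cons h p.bypass).IsCycle := Walk.cons_isCycle_iff _ h |>.mpr
    ⟨p.bypass_isPath, fun he ↦ hp (p.edges_bypass_subset_edges he)⟩
  calc G.egirth ≤ (Walk.cons h p.bypass).length := egirth_le_length hc
    _ ≤ p.length + 1 := by simpa using p.length_bypass_le_length

lemma egirth_le_length_add_length_add_one (h : G.Adj a b) (p : G.Walk c a) (q : G.Walk c b)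
    (hb : b ∉ p.support) (ha : a ∉ q.support) : G.egirth ≤ p.length + q.length + 1 := by
  have hab : s(a, b) ∉ (q.reverse.append p).edges := by
    simp only [Walk.edges_append, Walk.edges_reverse, List.mem_append, List.mem_reverse, not_or]
    exact ⟨fun he ↦ ha (q.fst_mem_support_of_mem_edges he),
      fun he ↦ hb (p.snd_mem_support_of_mem_edges he)⟩
  simpa [add_comm] using egirth_le_length_add_one h _ hab

lemma egirth_le_of_adj_of_edist_eq {m : ℕ} (h : G.Adj x y) (hx : G.edist c x = m)
    (hy : G.edist c y = m) : G.egirth ≤ (2 * m + 1 : ℕ) := by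
  obtain ⟨p, hp⟩ := exists_walk_of_edist_eq_coe hx
  obtain ⟨q, hq⟩ := exists_walk_of_edist_eq_coe hy
  have hyp := p.notMem_support_of_length_le_edist h.ne' (by rw [hp, hy])
  have hxq := q.notMem_support_of_length_le_edist h.ne (by rw [hq, hx])
  simpa [hp, hq, two_mul] using egirth_le_length_add_length_add_one h p q hyp hxq

lemma egirth_le_of_adj_of_adj_of_edist_eq {m : ℕ} (hy : G.Adj x y) (hz : G.Adj x z)
    (hyz : y ≠ z) (hcy : G.edist c y = m) (hcz : G.edist c z = m) (hcx : m ≤ G.edist c x) :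
    G.egirth ≤ (2 * m + 2 : ℕ) := by
  obtain ⟨p, hp⟩ := exists_walk_of_edist_eq_coe hcz
  obtain ⟨q, hq⟩ := exists_walk_of_edist_eq_coe hcy
  have hyp : y ∉ (p.concat hz.symm).support := by
    rw [Walk.support_concat, List.mem_append, List.mem_singleton, not_or]
    exact ⟨p.notMem_support_of_length_le_edist hyz (by rw [hp, hcy]), hy.ne'⟩
  have hxq := q.notMem_support_of_length_le_edist hy.ne (by rw [hq]; exact hcx)
  have := egirth_le_length_add_length_add_one hy _ q hyp hxq
  rw [Walk.length_concat, hp, hq] at this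
  exact this.trans_eq (by push_cast; ring)

end SimpleGraph

section kEball

variable {V : Type*} {G : SimpleGraph V} {u v x y : V} {k : ℕ}

def kEballVerts (G : SimpleGraph V) (u v : V) (k : ℕ) : Set V :=
  {w | G.edist u w ≤ k ∨ G.edist v w ≤ k}

lemma kEball_coe : (kEball G u v k).coe = G.induce (kEballVerts G u v k) :=
  (induce_eq_coe_induce_top _).symm

lemma edist_le_of_mem_kEballVerts (huv : G.Adj u v) (hx : x ∈ kEballVerts G u v k) :
    G.edist u x ≤ (k + 1 : ℕ) := by
  rcases hx with hx | hx
  · exact hx.trans (by norm_cast; omega)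
  · calc G.edist u x ≤ G.edist u v + G.edist v x := G.edist_triangle
      _ ≤ 1 + k := add_le_add (edist_eq_one_iff_adj.mpr huv).le hx
      _ = (k + 1 : ℕ) := by push_cast; ring

lemma reachable_of_mem_kEballVerts (huv : G.Adj u v) (hx : x ∈ kEballVerts G u v k) :
    G.Reachable u x :=
  reachable_of_edist_ne_top (ne_top_of_le_ne_top (ENat.natCast_ne_top _)
    (edist_le_of_mem_kEballVerts huv hx))

/-- If the common distance from `u` is at most `k`, the edge `xy` closes a short cycle with
geodesics from `u`; otherwise `x` and `y` are both at distance exactly `k` from `v`. -/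
lemma edist_ne_of_adj_of_mem_kEballVerts (hg : (2 * k + 3 : ℕ) ≤ G.egirth) (huv : G.Adj u v)
    (hx : x ∈ kEballVerts G u v k) (hy : y ∈ kEballVerts G u v k) (hxy : G.Adj x y) :
    G.edist u x ≠ G.edist u y := by
  intro h
  suffices ∃ c, ∃ m ≤ k, G.edist c x = m ∧ G.edist c y = m by
    obtain ⟨c, m, hmk, hcx, hcy⟩ := this
    have := hg.trans (egirth_le_of_adj_of_edist_eq hxy hcx hcy)
    norm_cast at this
    omega
  by_cases hux : G.edist u x ≤ k
  · obtain ⟨m, hm⟩ := ENat.ne_top_iff_exists.mp (ne_top_of_le_ne_top (ENat.natCast_ne_top k) hux)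
    exact ⟨u, m, by rw [← hm] at hux; exact_mod_cast hux, hm.symm, h ▸ hm.symm⟩
  have hvk {z : V} (hz : z ∈ kEballVerts G u v k) (huz : ¬G.edist u z ≤ k) : G.edist v z = k := by
    have hvz := hz.resolve_left huz
    obtain ⟨d, hd⟩ := ENat.ne_top_iff_exists.mp (ne_top_of_le_ne_top (ENat.natCast_ne_top k) hvz)
    have htri : G.edist u z ≤ 1 + d := by
      rw [hd, ← edist_eq_one_iff_adj.mpr huv]; exact G.edist_triangle
    rw [← hd] at hvz ⊢
    have : ¬(1 + d : ℕ∞) ≤ k := fun h' ↦ huz (htri.trans h')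
    norm_cast at hvz this ⊢
    omega
  exact ⟨v, k, le_rfl, hvk hx hux, hvk hy (h ▸ hux)⟩

lemma dist_ne_of_adj_of_mem_kEballVerts (hg : (2 * k + 3 : ℕ) ≤ G.egirth) (huv : G.Adj u v)
    (hx : x ∈ kEballVerts G u v k) (hy : y ∈ kEballVerts G u v k) (hxy : G.Adj x y) :
    G.dist u x ≠ G.dist u y := fun h ↦ edist_ne_of_adj_of_mem_kEballVerts hg huv hx hy hxy <| by
  rw [← (reachable_of_mem_kEballVerts huv hx).coe_dist_eq_edist,
    ← (reachable_of_mem_kEballVerts huv hy).coe_dist_eq_edist, h]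

lemma SimpleGraph.Walk.IsCycle.not_support_subset_kEballVerts (hg : (2 * k + 3 : ℕ) ≤ G.egirth)
    (huv : G.Adj u v) {a : V} {c : G.Walk a a} (hc : c.IsCycle) :
    ¬∀ z ∈ c.support, z ∈ kEballVerts G u v k := by
  classical
  intro hS
  obtain ⟨x, hx, hmax⟩ := c.support.toFinset.exists_max_image (G.dist u) ⟨a, by simp⟩
  simp only [List.mem_toFinset] at hx hmax
  let c' := c.rotate x hx
  have hc' : c'.IsCycle := hc.rotate hx
  have hmem (n : ℕ) : c'.getVert n ∈ c.support :=
    (c.mem_support_rotate_iff x hx).mp (c'.getVert_mem_support n)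
  have hedist {z : V} (hz : z ∈ c.support) : G.edist u z = G.dist u z :=
    (reachable_of_mem_kEballVerts huv (hS z hz)).coe_dist_eq_edist.symm
  have hparent {y : V} (hxy : G.Adj x y) (hy : y ∈ c.support) :
      G.dist u y + 1 = G.dist u x := by
    have hne := dist_ne_of_adj_of_mem_kEballVerts hg huv (hS x hx) (hS y hy) hxy
    have hle := hmax y hy
    rcases hxy.diff_dist_adj (u := u) with h | h | h <;> omega
  have hy := hparent (c'.adj_snd hc'.not_nil) (hmem 1)
  have hz := hparent (c'.adj_penultimate hc'.not_nil).symm (hmem _)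
  have hxk : G.dist u x ≤ k + 1 := by
    have := edist_le_of_mem_kEballVerts huv (hS x hx)
    rw [hedist hx] at this
    exact_mod_cast this
  have hyz : G.dist u c'.penultimate = G.dist u c'.snd := by omega
  have := hg.trans <| egirth_le_of_adj_of_adj_of_edist_eq (c'.adj_snd hc'.not_nil)
    (c'.adj_penultimate hc'.not_nil).symm hc'.snd_ne_penultimate (hedist (hmem 1))
    ((hedist (hmem _)).trans (congrArg _ hyz)) (by rw [hedist hx, ← hy]; norm_cast; omega)
  norm_cast at this
  omega

lemma isAcyclic_induce_kEballVerts (hg : (2 * k + 3 : ℕ) ≤ G.egirth) (huv : G.Adj u v) :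
    (G.induce (kEballVerts G u v k)).IsAcyclic := by
  intro a c hc
  refine (hc.map (f := (Embedding.induce (G := G) _).toHom) Subtype.val_injective
    ).not_support_subset_kEballVerts hg huv fun z hz ↦ ?_
  obtain ⟨t, -, rfl⟩ := List.mem_map.mp (Walk.support_map _ c ▸ hz)
  exact t.2

lemma exists_edist_induce_kEballVerts_le (w : kEballVerts G u v k) :
    ∃ c ∈ ({u, v} : Set V), ∃ hc : c ∈ kEballVerts G u v k,
      (G.induce (kEballVerts G u v k)).edist ⟨c, hc⟩ w ≤ k := by
  rcases w with ⟨w, hw | hw⟩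
  · exact ⟨u, .inl rfl, .inl (by simp),
      (edist_induce_le (fun z hz ↦ .inl (hz.trans hw)) _ _).trans hw⟩
  · exact ⟨v, .inr rfl, .inr (by simp),
      (edist_induce_le (fun z hz ↦ .inr (hz.trans hw)) _ _).trans hw⟩

lemma ediam_induce_kEballVerts_le (huv : G.Adj u v) :
    (G.induce (kEballVerts G u v k)).ediam ≤ (2 * k + 1 : ℕ) := by
  refine ediam_le_of_edist_le fun a b ↦ ?_
  obtain ⟨c, hc, hcS, hac⟩ := exists_edist_induce_kEballVerts_le a
  obtain ⟨d, hd, hdS, hbd⟩ := exists_edist_induce_kEballVerts_le b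
  have hcd : (G.induce (kEballVerts G u v k)).edist ⟨c, hcS⟩ ⟨d, hdS⟩ ≤ 1 := by
    rw [edist_le_one_iff_adj_or_eq]
    rcases hc with rfl | rfl <;> rcases hd with rfl | rfl <;> simp [huv, huv.symm]
  rw [edist_comm] at hac
  calc _ ≤ _ := (G.induce _).edist_triangle (v := ⟨c, hcS⟩)
    _ ≤ _ := add_le_add_right ((G.induce _).edist_triangle (v := ⟨d, hdS⟩)) _
    _ ≤ k + (1 + k) := add_le_add hac (add_le_add hcd hbd)
    _ = (2 * k + 1 : ℕ) := by push_cast; ring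

lemma isEvine_kEball (hg : (2 * k + 3 : ℕ) ≤ G.egirth) (huv : G.Adj u v) {B : G.Subgraph}
    (hB : IsEvine k B.coe) (hBle : B ≤ kEball G u v k) : IsEvine k (kEball G u v k).coe := by
  have : Nonempty (kEball G u v k).verts := ⟨⟨u, .inl (by simp)⟩⟩
  have hdiam : (kEball G u v k).coe.ediam ≤ (2 * k + 1 : ℕ) := by
    rw [kEball_coe]; exact ediam_induce_kEballVerts_le huv
  have hacyc : (kEball G u v k).coe.IsAcyclic := by
    rw [kEball_coe]; exact isAcyclic_induce_kEballVerts hg huv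
  refine ⟨⟨connected_of_ediam_ne_top (ne_top_of_le_ne_top (ENat.natCast_ne_top _) hdiam), hacyc⟩,
    le_antisymm hdiam ?_⟩
  exact (hB.2 : B.coe.ediam = _) ▸ hacyc.ediam_le_of_hom (Subgraph.inclusion hBle)
    (Subgraph.inclusion.injective hBle) hB.1.connected.preconnected

lemma le_kEball {B B' : G.Subgraph} (hB : B.coe.Connected) (hB' : IsEvine k B'.coe)
    (hBB' : B ≤ B') (hu : u ∈ B.verts) (hv : v ∈ B.verts) (huv : B.Adj u v)
    (heccu : B.coe.eccent ⟨u, hu⟩ = (k + 1 : ℕ)) (heccv : B.coe.eccent ⟨v, hv⟩ = (k + 1 : ℕ)) :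
    B' ≤ kEball G u v k := by
  refine Subgraph.le_induce_top_verts.trans (Subgraph.induce_mono_right fun w hw ↦ ?_)
  have hle (c : V) (hc : c ∈ B'.verts) : G.edist c w ≤ B'.coe.edist ⟨c, hc⟩ ⟨w, hw⟩ :=
    edist_map_le B'.hom
  exact (hB'.1.edist_le_or_edist_le_of_hom hB'.2.le (Subgraph.inclusion hBB')
    (Subgraph.inclusion.injective hBB') hB huv.coe heccu heccv ⟨w, hw⟩).imp
    (hle u _).trans (hle v _).trans

end kEball

theorem evine_absorbed_in_kEball_general {V : Type*} (k : ℕ)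
    (G : SimpleGraph V)
    (hgirth : ∀ (v : V) (c : G.Walk v v), c.IsCycle → 2 * k + 3 ≤ c.length)
    (B : G.Subgraph) (hB : IsEvine k B.coe)
    (u v : V) (hu : u ∈ B.verts) (hv : v ∈ B.verts) (hadj : B.Adj u v)
    (heccu : _root_.eccent B.coe ⟨u, hu⟩ = ((k + 1 : ℕ) : ℕ∞))
    (heccv : _root_.eccent B.coe ⟨v, hv⟩ = ((k + 1 : ℕ) : ℕ∞)) :
    IsEvine k (kEball G u v k).coe ∧ B ≤ kEball G u v k ∧
      ∀ B' : G.Subgraph, IsEvine k B'.coe → B ≤ B' → B' ≤ kEball G u v k := by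
  have hg : ((2 * k + 3 : ℕ) : ℕ∞) ≤ G.egirth :=
    le_egirth.mpr fun a c hc ↦ Nat.cast_le.mpr (hgirth a c hc)
  have hle (B' : G.Subgraph) (hB' : IsEvine k B'.coe) (hBB' : B ≤ B') : B' ≤ kEball G u v k :=
    le_kEball hB.1.connected hB' hBB' hu hv hadj heccu heccv
  have hBle := hle B hB le_rfl
  exact ⟨isEvine_kEball hg hadj.adj_sub hB hBle, hBle, hle⟩

/-- In a graph with girth at least `2k+3`, every subgraph that is a `k`-evine is
contained in a unique maximal `k`-evine, namely the `k`-eball at its central edge `uv`: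
the `k`-eball at `uv` is a `k`-evine of `G`, it contains the given `k`-evine, and every
`k`-evine of `G` containing the given `k`-evine is a subgraph of the `k`-eball at `uv`. -/
theorem evine_absorbed_in_kEball {V : Type*} [Fintype V] (k : ℕ) (hk : 1 ≤ k)
    (G : SimpleGraph V)
    (hgirth : ∀ (v : V) (c : G.Walk v v), c.IsCycle → 2 * k + 3 ≤ c.length)
    (B : G.Subgraph) (hB : IsEvine k B.coe)
    (u v : V) (hu : u ∈ B.verts) (hv : v ∈ B.verts) (hadj : B.Adj u v)
    (heccu : _root_.eccent B.coe ⟨u, hu⟩ = ((k + 1 : ℕ) : ℕ∞))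
    (heccv : _root_.eccent B.coe ⟨v, hv⟩ = ((k + 1 : ℕ) : ℕ∞)) :
    IsEvine k (kEball G u v k).coe ∧ B ≤ kEball G u v k ∧
      ∀ B' : G.Subgraph, IsEvine k B'.coe → B ≤ B' → B' ≤ kEball G u v k :=
  evine_absorbed_in_kEball_general k G hgirth B hB u v hu hv hadj heccu heccv
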